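/- Let K ⊂ ℝ be a connected set (interval) and f : K → ℝ a non-negative function in L²(γ₁, K) with connected level sets {f > t}. Then ∫_K f(x) x² dγ₁(x) ≤ ∫_{H_K} f*(x) x² dγ₁(x), where f* is the Ehrhard rearrangement of f onto the left half-line H_K of the same one-dimensional Gaussian measure as K. -/

import Mathlib

open MeasureTheory Real Set ProbabilityTheory

noncomputable def stdGaussian1 : Measure ℝ :=
  volume.withDensity fun x =>
    ENNReal.ofReal ((2 * π) ^ (-(1 : ℝ) / 2) * Real.exp (-x ^ 2 / 2))

/-
Layer cake, twice. Writing `f = ∫₀^∞ 1{f > t} dt` reduces the claim to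
`∫_A x² dγ₁ ≤ ∫_H x² dγ₁` for each level set `A = {f > t}`, an interval, and the corresponding
`H = {f* > t}`, a left half-line of the same Gaussian measure. Writing `x² = ∫₀^∞ 1{|x| > √s} ds`
reduces that in turn to `γ₁(A ∩ {|x| > α}) ≤ γ₁(H ∩ {|x| > α})`. If `A ⊇ [-α, α]`, then `A` has
the largest possible mass inside `[-α, α]`, hence (as `γ₁(A) = γ₁(H)`) the smallest outside.
Otherwise `A ∩ {|x| > α}` lies in a single tail, so by symmetry of `γ₁` its mass is at most
`min(γ₁(-∞, -α), γ₁(A))`, and a left half-line always keeps at least that much outside `[-α, α]`.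
-/

section SymmetricTails

variable {μ : Measure ℝ} {A H : Set ℝ} {α : ℝ}

lemma compl_setOf_lt_abs (α : ℝ) : {x : ℝ | α < |x|}ᶜ = Icc (-α) α := by
  ext x; simp [abs_le]

lemma Iio_neg_subset_setOf_lt_abs (α : ℝ) : Iio (-α) ⊆ {x : ℝ | α < |x|} :=
  fun _ hx => show α < |_| from lt_abs.2 (Or.inr (lt_neg_of_lt_neg hx))

lemma min_le_measure_inter_setOf_lt_abs [NullSingletonClass μ] (hH : IsLowerSet H) (α : ℝ) :
    min (μ (Iio (-α))) (μ H) ≤ μ (H ∩ {x | α < |x|}) := by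
  by_cases hex : ∃ x ∈ H, -α < x
  · obtain ⟨x, hxH, hx⟩ := hex
    exact min_le_of_left_le <| measure_mono fun y hy =>
      ⟨hH (hy.out.trans hx).le hxH, Iio_neg_subset_setOf_lt_abs α hy⟩
  · push Not at hex
    refine min_le_of_right_le ?_
    calc μ H = μ (H \ {-α}) := (measure_sdiff_null (measure_singleton _)).symm
      _ ≤ μ (H ∩ {x | α < |x|}) := measure_mono fun y hy =>
        ⟨hy.1, Iio_neg_subset_setOf_lt_abs α ((hex y hy.1).lt_of_ne hy.2)⟩

lemma inter_setOf_lt_abs_subset_of_not_Icc_subset (hA : A.OrdConnected)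
    (hspan : ¬ Icc (-α) α ⊆ A) :
    A ∩ {x | α < |x|} ⊆ Iio (-α) ∨ A ∩ {x | α < |x|} ⊆ Ioi α := by
  by_cases hleft : ∃ a ∈ A, a < -α
  · obtain ⟨a, haA, ha⟩ := hleft
    left
    rintro y ⟨hyA, hy : α < |y|⟩
    refine mem_Iio.2 (lt_of_not_ge fun hy' : -α ≤ y => ?_)
    have hαy : α < y := (lt_abs.1 hy).resolve_right (by linarith)
    exact hspan ((Icc_subset_Icc ha.le hαy.le).trans (hA.out haA hyA))
  · push Not at hleft
    right
    rintro y ⟨hyA, hy : α < |y|⟩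
    exact (lt_abs.1 hy).resolve_right (by linarith [hleft y hyA])

lemma measure_inter_setOf_lt_abs_le_min [μ.IsNegInvariant] (hA : A.OrdConnected)
    (hspan : ¬ Icc (-α) α ⊆ A) :
    μ (A ∩ {x | α < |x|}) ≤ min (μ (Iio (-α))) (μ A) := by
  refine le_min ?_ (measure_mono inter_subset_left)
  rcases inter_setOf_lt_abs_subset_of_not_Icc_subset hA hspan with h | h
  · exact measure_mono h
  · calc _ ≤ μ (Ioi α) := measure_mono h
      _ = μ (Iio (-α)) := by rw [← Measure.measure_neg, neg_Ioi]

theorem measure_inter_setOf_lt_abs_le [IsFiniteMeasure μ] [NullSingletonClass μ]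
    [μ.IsNegInvariant] (hA : A.OrdConnected) (hH : IsLowerSet H) (hAH : μ A = μ H) (α : ℝ) :
    μ (A ∩ {x | α < |x|}) ≤ μ (H ∩ {x | α < |x|}) := by
  by_cases hspan : Icc (-α) α ⊆ A
  · have hT : MeasurableSet {x : ℝ | α < |x|} := measurableSet_lt measurable_const measurable_abs
    have hAc : A \ {x | α < |x|} = Icc (-α) α := by
      rw [sdiff_eq, compl_setOf_lt_abs, inter_eq_right.2 hspan]
    have hHc : H \ {x | α < |x|} ⊆ Icc (-α) α := by
      rw [sdiff_eq, compl_setOf_lt_abs]; exact inter_subset_right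
    refine (ENNReal.add_le_add_iff_right (measure_ne_top μ (Icc (-α) α))).1 ?_
    calc μ (A ∩ {x | α < |x|}) + μ (Icc (-α) α) = μ H := by
          rw [← hAc, measure_inter_add_sdiff _ hT, hAH]
      _ = μ (H ∩ {x | α < |x|}) + μ (H \ {x | α < |x|}) := (measure_inter_add_sdiff _ hT).symm
      _ ≤ μ (H ∩ {x | α < |x|}) + μ (Icc (-α) α) := by gcongr
  · calc μ (A ∩ {x | α < |x|}) ≤ min (μ (Iio (-α))) (μ A) :=
          measure_inter_setOf_lt_abs_le_min hA hspan
      _ ≤ μ (H ∩ {x | α < |x|}) := hAH ▸ min_le_measure_inter_setOf_lt_abs hH α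

end SymmetricTails

lemma AntitoneOn.isLowerSet_sep_lt {α β : Type*} [Preorder α] [Preorder β] {f : α → β} {c : α}
    (hf : AntitoneOn f (Iic c)) (t : β) : IsLowerSet {x ∈ Iic c | t < f x} :=
  fun _ y hyx ⟨hxc, hx⟩ =>
    have hyc : y ∈ Iic c := hyx.trans hxc
    ⟨hyc, hx.trans_le (hf hyc hxc hyx)⟩

lemma setOf_lt_sq {t : ℝ} (ht : 0 ≤ t) : {x : ℝ | t < x ^ 2} = {x | √t < |x|} := by
  ext x
  show t < x ^ 2 ↔ √t < |x|
  rw [← sqrt_lt_sqrt_iff ht, sqrt_sq_eq_abs]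

lemma setLIntegral_ofReal_mul_eq_lintegral_setLIntegral_lt {X : Type*} [MeasurableSpace X]
    (μ : Measure X) {E : Set X} (hE : MeasurableSet E) {h w : X → ℝ} (hh : Measurable h)
    (hw : Measurable w) (h0 : ∀ x ∈ E, 0 ≤ h x) :
    ∫⁻ x in E, ENNReal.ofReal (h x * w x) ∂μ
      = ∫⁻ t in Ioi 0, ∫⁻ x in {x ∈ E | t < h x}, ENNReal.ofReal (w x) ∂μ := by
  set ν := (μ.restrict E).withDensity fun x => ENNReal.ofReal (w x)
  have hν : ∫⁻ x in E, ENNReal.ofReal (h x * w x) ∂μ = ∫⁻ x, ENNReal.ofReal (h x) ∂ν := by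
    rw [lintegral_withDensity_eq_lintegral_mul _ hw.ennreal_ofReal hh.ennreal_ofReal]
    refine setLIntegral_congr_fun hE fun x hx => ?_
    rw [ENNReal.ofReal_mul (h0 x hx), Pi.mul_apply, mul_comm]
  have h0ν : 0 ≤ᵐ[ν] h := (withDensity_absolutelyContinuous _ _).ae_le
      ((ae_restrict_iff' hE).2 (ae_of_all _ h0))
  have hlev (t : ℝ) : MeasurableSet {x | t < h x} := measurableSet_lt measurable_const hh
  rw [hν, lintegral_eq_lintegral_meas_lt _ h0ν hh.aemeasurable]
  refine lintegral_congr fun t => ?_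
  rw [withDensity_apply _ (hlev t), Measure.restrict_restrict (hlev t), inter_comm]
  rfl

section SquareWeight

variable {μ : Measure ℝ} [IsFiniteMeasure μ] [NullSingletonClass μ] [μ.IsNegInvariant]
  {A H : Set ℝ}

theorem setLIntegral_ofReal_sq_le (hA : A.OrdConnected) (hH : IsLowerSet H) (hAH : μ A = μ H) :
    ∫⁻ x in A, ENNReal.ofReal (x ^ 2) ∂μ ≤ ∫⁻ x in H, ENNReal.ofReal (x ^ 2) ∂μ := by
  have hsq : Measurable fun x : ℝ => x ^ 2 := by fun_prop
  rw [lintegral_eq_lintegral_meas_lt _ (ae_of_all _ sq_nonneg) hsq.aemeasurable,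
    lintegral_eq_lintegral_meas_lt _ (ae_of_all _ sq_nonneg) hsq.aemeasurable]
  refine setLIntegral_mono' measurableSet_Ioi fun t (ht : 0 < t) => ?_
  rw [Measure.restrict_apply (measurableSet_lt measurable_const hsq),
    Measure.restrict_apply (measurableSet_lt measurable_const hsq), setOf_lt_sq ht.le,
    inter_comm, inter_comm _ H]
  exact measure_inter_setOf_lt_abs_le hA hH hAH _

theorem setLIntegral_ofReal_mul_sq_le {f g : ℝ → ℝ} (hA : MeasurableSet A) (hH : MeasurableSet H)
    (hf : Measurable f) (hg : Measurable g) (hf0 : ∀ x ∈ A, 0 ≤ f x) (hg0 : ∀ x ∈ H, 0 ≤ g x)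
    (hfconn : ∀ t > 0, {x ∈ A | t < f x}.OrdConnected)
    (hglow : ∀ t > 0, IsLowerSet {x ∈ H | t < g x})
    (hlev : ∀ t > 0, μ {x ∈ A | t < f x} = μ {x ∈ H | t < g x}) :
    ∫⁻ x in A, ENNReal.ofReal (f x * x ^ 2) ∂μ ≤ ∫⁻ x in H, ENNReal.ofReal (g x * x ^ 2) ∂μ := by
  have hsq : Measurable fun x : ℝ => x ^ 2 := by fun_prop
  rw [setLIntegral_ofReal_mul_eq_lintegral_setLIntegral_lt μ hA hf hsq hf0,
    setLIntegral_ofReal_mul_eq_lintegral_setLIntegral_lt μ hH hg hsq hg0]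
  exact setLIntegral_mono' measurableSet_Ioi fun t (ht : 0 < t) =>
    setLIntegral_ofReal_sq_le (hfconn t ht) (hglow t ht) (hlev t ht)

end SquareWeight

theorem stdGaussian1_eq_gaussianReal : stdGaussian1 = gaussianReal 0 1 := by
  rw [gaussianReal_of_var_ne_zero _ one_ne_zero, stdGaussian1]
  congr with x
  rw [gaussianPDF_def, gaussianPDFReal_def, neg_div, rpow_neg (by positivity),
    ← sqrt_eq_rpow]
  simp

instance : IsProbabilityMeasure stdGaussian1 := by
  rw [stdGaussian1_eq_gaussianReal]; infer_instance

instance : NullSingletonClass stdGaussian1 := by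
  rw [stdGaussian1_eq_gaussianReal]; exact nullSingletonClass_gaussianReal one_ne_zero

instance : stdGaussian1.IsNegInvariant := by
  rw [stdGaussian1_eq_gaussianReal]
  exact ⟨by rw [Measure.neg_def]; simpa using gaussianReal_map_neg (μ := 0) (v := 1)⟩

theorem stmt10_general (K : Set ℝ) (hK : MeasurableSet K)
    (f fstar : ℝ → ℝ)
    (hf0 : ∀ x ∈ K, 0 ≤ f x) (hfs0 : ∀ x, 0 ≤ fstar x)
    (hfm : Measurable f) (hfsm : Measurable fstar)
    (hlevconn : ∀ t : ℝ, ({x ∈ K | t < f x} : Set ℝ).OrdConnected)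
    (c : ℝ)
    (hfanti : AntitoneOn fstar (Set.Iic c))
    (hflev : ∀ t : ℝ, 0 ≤ t →
      stdGaussian1 {x ∈ Set.Iic c | t < fstar x} = stdGaussian1 {x ∈ K | t < f x})
    (hint2 : IntegrableOn (fun x => fstar x * x ^ 2) (Set.Iic c) stdGaussian1) :
    (∫ x in K, f x * x ^ 2 ∂stdGaussian1)
      ≤ ∫ x in Set.Iic c, fstar x * x ^ 2 ∂stdGaussian1 := by
  have hlhs : 0 ≤ᵐ[stdGaussian1.restrict K] fun x => f x * x ^ 2 :=
    (ae_restrict_iff' hK).2 (ae_of_all _ fun x hx => mul_nonneg (hf0 x hx) (sq_nonneg x))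
  have hrhs : 0 ≤ᵐ[stdGaussian1.restrict (Iic c)] fun x => fstar x * x ^ 2 :=
    ae_of_all _ fun x => mul_nonneg (hfs0 x) (sq_nonneg x)
  rw [integral_eq_lintegral_of_nonneg_ae hlhs (by fun_prop),
    integral_eq_lintegral_of_nonneg_ae hrhs (by fun_prop)]
  refine ENNReal.toReal_mono ((hasFiniteIntegral_iff_ofReal hrhs).1 hint2.hasFiniteIntegral).ne ?_
  exact setLIntegral_ofReal_mul_sq_le hK measurableSet_Iic hfm hfsm hf0 (fun x _ => hfs0 x)
    (fun t _ => hlevconn t) (fun t _ => hfanti.isLowerSet_sep_lt t)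
    (fun t ht => (hflev t ht.le).symm)

/-- One-dimensional Hardy–Littlewood-type principle for the weight `x²`: for a
nonnegative `f ∈ L²(γ₁, K)` on an interval `K` with connected level sets, and its
Ehrhard rearrangement `f*` on the half-line `H_K = (-∞, c]` of the same Gaussian
measure, `∫_K f(x) x² dγ₁ ≤ ∫_{H_K} f*(x) x² dγ₁`. -/
theorem stmt10 (K : Set ℝ) (hK : MeasurableSet K) (hKconn : K.OrdConnected)
    (f fstar : ℝ → ℝ)
    (hf0 : ∀ x ∈ K, 0 ≤ f x) (hfs0 : ∀ x, 0 ≤ fstar x)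
    (hfm : Measurable f) (hfsm : Measurable fstar)
    (hfL2 : MemLp f 2 (stdGaussian1.restrict K))
    (hlevconn : ∀ t : ℝ, ({x ∈ K | t < f x} : Set ℝ).OrdConnected)
    (c : ℝ) (hc : stdGaussian1 (Set.Iic c) = stdGaussian1 K)
    (hfanti : AntitoneOn fstar (Set.Iic c))
    (hflev : ∀ t : ℝ, 0 ≤ t →
      stdGaussian1 {x ∈ Set.Iic c | t < fstar x} = stdGaussian1 {x ∈ K | t < f x})
    (hint1 : IntegrableOn (fun x => f x * x ^ 2) K stdGaussian1)
    (hint2 : IntegrableOn (fun x => fstar x * x ^ 2) (Set.Iic c) stdGaussian1) :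
    (∫ x in K, f x * x ^ 2 ∂stdGaussian1)
      ≤ ∫ x in Set.Iic c, fstar x * x ^ 2 ∂stdGaussian1 :=
  stmt10_general K hK f fstar hf0 hfs0 hfm hfsm hlevconn c hfanti hflev hint2
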